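/- arXiv:2408.16019 — 4 statements merged into one kernel-verified Lean document; each statement's English description precedes it below -/
import Mathlib

section
/- For every x ∈ X, the forward orbit {Tⁿ(x) : n ∈ ℕ} is a bounded subset of ℝ²; that is, successive images of T never diverge. -/
open EuclideanGeometry Filter Metric Real
open scoped RealInnerProductSpace

noncomputable section

abbrev Pt := EuclideanSpace ℝ (Fin 2)

/-- A line: a one-dimensional affine subspace of the plane, as a set of points. -/
def IsLine (L : Set Pt) : Prop :=
  ∃ a d : Pt, d ≠ 0 ∧ L = {p | ∃ t : ℝ, p = a + t • d}

/-- `p` is the orthogonal projection of `x` onto the line `L`: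
the unique nearest point of `L` to `x` (the foot of the perpendicular). -/
def IsOrthProj (L : Set Pt) (x p : Pt) : Prop :=
  p ∈ L ∧ ∀ q ∈ L, dist x p ≤ dist x q

/-- Three pairwise nonparallel, nonconcurrent lines in the plane: each pair meets in
exactly one point, and the three intersection points `A = L₁ ∩ L₂`, `B = L₁ ∩ L₃`,
`C = L₂ ∩ L₃` are distinct, forming a triangle `Q = △ABC`. -/
structure Config where
  L : Fin 3 → Set Pt
  A : Pt
  B : Pt
  C : Pt
  isLine : ∀ i, IsLine (L i)
  h01 : L 0 ∩ L 1 = {A}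
  h02 : L 0 ∩ L 2 = {B}
  h12 : L 1 ∩ L 2 = {C}
  hAB : A ≠ B
  hAC : A ≠ C
  hBC : B ≠ C

/-- The space `X = L₁ ∪ L₂ ∪ L₃`. -/
def Config.X (cfg : Config) : Set Pt := cfg.L 0 ∪ cfg.L 1 ∪ cfg.L 2

/-- The defining properties of the piecewise map `T : X → X`: if `x` lies on exactly one
line `Lᵢ` and `x₁, x₂` are the orthogonal projections of `x` onto the other two lines,
then `T x` is the farther projection (and `T x = x` in case of a tie); the vertices
`A, B, C` are fixed by convention. -/
def IsTMap (cfg : Config) (T : Pt → Pt) : Prop :=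
  (∀ x ∈ cfg.X, T x ∈ cfg.X) ∧
  T cfg.A = cfg.A ∧ T cfg.B = cfg.B ∧ T cfg.C = cfg.C ∧
  ∀ i j k : Fin 3, i ≠ j → i ≠ k → j ≠ k →
    ∀ x ∈ cfg.L i, x ∉ cfg.L j → x ∉ cfg.L k →
      ∀ x₁ x₂ : Pt, IsOrthProj (cfg.L j) x x₁ → IsOrthProj (cfg.L k) x x₂ →
        (dist x x₁ > dist x x₂ → T x = x₁) ∧
        (dist x x₂ > dist x x₁ → T x = x₂) ∧
        (dist x x₁ = dist x x₂ → T x = x)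

/-- Pythagoras identity for the foot of perpendicular. -/
lemma key_identity (a d x : Pt) (hd : d ≠ 0) (s : ℝ) :
    ‖x - (a + s • d)‖^2
      = ‖x - (a + (⟪x - a, d⟫ / ‖d‖^2) • d)‖^2 + (⟪x - a, d⟫ / ‖d‖^2 - s)^2 * ‖d‖^2 := by
  set c : ℝ := ⟪x - a, d⟫ / ‖d‖^2 with hc
  have hdn : (‖d‖ : ℝ)^2 ≠ 0 := pow_ne_zero 2 (norm_ne_zero_iff.mpr hd)
  have hsum : (x - (a + c • d)) + (c - s) • d = x - (a + s • d) := by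
    rw [sub_smul]; abel
  have horth : ⟪x - (a + c • d), (c - s) • d⟫ = 0 := by
    rw [inner_smul_right]
    have : ⟪x - (a + c • d), d⟫ = 0 := by
      have : x - (a + c • d) = (x - a) - c • d := by abel
      rw [this, inner_sub_left, real_inner_smul_left, real_inner_self_eq_norm_sq]
      field_simp [hc]
      rw [hc, div_mul_cancel₀ _ hdn, sub_self]
    rw [this, mul_zero]
  have h := norm_add_sq_real (x - (a + c • d)) ((c - s) • d)
  rw [hsum, horth] at h
  rw [h, norm_smul, Real.norm_eq_abs, mul_pow, sq_abs]
  ring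

lemma isOrthProj_formula (a d x : Pt) (hd : d ≠ 0) :
    IsOrthProj {p | ∃ t : ℝ, p = a + t • d} x (a + (⟪x - a, d⟫ / ‖d‖^2) • d) := by
  refine ⟨⟨_, rfl⟩, ?_⟩
  rintro q ⟨s, rfl⟩
  have h := key_identity a d x hd s
  have h1 : (0:ℝ) ≤ (⟪x - a, d⟫ / ‖d‖^2 - s)^2 * ‖d‖^2 := by positivity
  rw [dist_eq_norm, dist_eq_norm]
  nlinarith [norm_nonneg (x - (a + (⟪x - a, d⟫ / ‖d‖^2) • d)), norm_nonneg (x - (a + s • d))]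

lemma isOrthProj_unique (a d x p : Pt) (hd : d ≠ 0)
    (hp : IsOrthProj {p | ∃ t : ℝ, p = a + t • d} x p) :
    p = a + (⟪x - a, d⟫ / ‖d‖^2) • d := by
  obtain ⟨⟨s, rfl⟩, hmin⟩ := hp
  have hf := isOrthProj_formula a d x hd
  have h1 := hmin _ hf.1
  have h2 := hf.2 _ ⟨s, rfl⟩
  have heq : dist x (a + s • d) = dist x (a + (⟪x - a, d⟫ / ‖d‖^2) • d) := le_antisymm h1 h2
  have h := key_identity a d x hd s
  rw [dist_eq_norm, dist_eq_norm] at heq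
  have hdn : (0:ℝ) < ‖d‖^2 := pow_pos (norm_pos_iff.mpr hd) 2
  have heq2 : ‖x - (a + s • d)‖^2 = ‖x - (a + (⟪x - a, d⟫ / ‖d‖^2) • d)‖^2 := by rw [heq]
  have hs : (⟪x - a, d⟫ / ‖d‖^2 - s)^2 = 0 := by
    nlinarith [sq_nonneg (⟪x - a, d⟫ / ‖d‖^2 - s)]
  have hss : (⟪x - a, d⟫ / ‖d‖^2 : ℝ) = s :=
    sub_eq_zero.mp ((pow_eq_zero_iff two_ne_zero).mp hs)
  rw [hss]

/-- If x lies on a line through V and p is the orthogonal projection of x onto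
another line through V, then p is closer to V by a uniform factor c < 1. -/
lemma main_step (L₁ L₂ : Set Pt) (hL1 : IsLine L₁) (hL2 : IsLine L₂) (V : Pt)
    (hV : L₁ ∩ L₂ = {V}) :
    ∃ c : ℝ, 0 ≤ c ∧ c < 1 ∧ ∀ x ∈ L₁, ∀ p, IsOrthProj L₂ x p → dist p V ≤ c * dist x V := by
  obtain ⟨a₁, d₁, hd₁, hE1⟩ := hL1
  obtain ⟨a₂, d₂, hd₂, hE2⟩ := hL2
  have hVmem : V ∈ L₁ ∩ L₂ := hV ▸ rfl
  -- re-anchor both lines at V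
  have repoint : ∀ (a d : Pt), V ∈ {p : Pt | ∃ t : ℝ, p = a + t • d} →
      {p : Pt | ∃ t : ℝ, p = a + t • d} = {p : Pt | ∃ t : ℝ, p = V + t • d} := by
    rintro a d ⟨t₀, ht₀⟩
    ext q
    constructor
    · rintro ⟨t, rfl⟩; exact ⟨t - t₀, by rw [ht₀, sub_smul]; abel⟩
    · rintro ⟨t, rfl⟩; exact ⟨t + t₀, by rw [ht₀, add_smul]; abel⟩
  have hE1' : L₁ = {p : Pt | ∃ t : ℝ, p = V + t • d₁} := by
    rw [hE1]; exact repoint a₁ d₁ (hE1 ▸ hVmem.1)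
  have hE2' : L₂ = {p : Pt | ∃ t : ℝ, p = V + t • d₂} := by
    rw [hE2]; exact repoint a₂ d₂ (hE2 ▸ hVmem.2)
  -- nonparallel
  have hnp : ¬ ∃ r : ℝ, d₂ = r • d₁ := by
    rintro ⟨r, hr⟩
    have h1 : V + d₂ ∈ L₁ := by rw [hE1']; exact ⟨r, by rw [hr]⟩
    have h2 : V + d₂ ∈ L₂ := by rw [hE2']; exact ⟨1, by simp⟩
    have : V + d₂ = V := by
      have := hV ▸ (Set.mem_inter h1 h2); simpa using this
    exact hd₂ (by simpa using this)
  set c : ℝ := |⟪d₁, d₂⟫| / (‖d₁‖ * ‖d₂‖) with hcdef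
  have hc0 : 0 ≤ c := by positivity
  have hd₁n : (0:ℝ) < ‖d₁‖ := norm_pos_iff.mpr hd₁
  have hd₂n : (0:ℝ) < ‖d₂‖ := norm_pos_iff.mpr hd₂
  have hceq : c = |⟪d₁, d₂⟫ / (‖d₁‖ * ‖d₂‖)| := by
    rw [abs_div, abs_of_pos (by positivity : (0:ℝ) < ‖d₁‖ * ‖d₂‖)]
  have hc1 : c < 1 := by
    rcases lt_or_eq_of_le (hceq ▸ abs_real_inner_div_norm_mul_norm_le_one d₁ d₂) with h | h
    · exact h
    · exfalso
      obtain ⟨-, r, -, hr⟩ := (abs_real_inner_div_norm_mul_norm_eq_one_iff d₁ d₂).mp (hceq ▸ h)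
      exact hnp ⟨r, hr⟩
  refine ⟨c, hc0, hc1, ?_⟩
  intro x hx p hp
  rw [hE1'] at hx
  obtain ⟨t, rfl⟩ := hx
  rw [hE2'] at hp
  have hpeq := isOrthProj_unique V d₂ (V + t • d₁) p hd₂ hp
  have hinner : ⟪(V + t • d₁) - V, d₂⟫ = t * ⟪d₁, d₂⟫ := by
    simp [inner_smul_left]
  rw [hpeq]
  have edist : ∀ (w : Pt) (s : ℝ) (d : Pt), dist (w + s • d) w = |s| * ‖d‖ := by
    intro w s d
    rw [dist_eq_norm, add_sub_cancel_left, norm_smul, Real.norm_eq_abs]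
  have e1 : dist (V + (⟪(V + t • d₁) - V, d₂⟫ / ‖d₂‖^2) • d₂) V
      = |⟪(V + t • d₁) - V, d₂⟫ / ‖d₂‖^2| * ‖d₂‖ := edist _ _ _
  have e2 : dist (V + t • d₁) V = |t| * ‖d₁‖ := edist _ _ _
  rw [e1, e2, hinner, hcdef]
  apply le_of_eq
  have habs : |t * ⟪d₁, d₂⟫ / ‖d₂‖^2| = |t| * |⟪d₁, d₂⟫| / ‖d₂‖^2 := by
    rw [abs_div, abs_mul, abs_of_nonneg (sq_nonneg ‖d₂‖)]
  rw [habs]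
  field_simp [hd₁n.ne', hd₂n.ne']


/-- One-step estimate for a point lying on exactly one line. -/
lemma step_case (cfg : Config) (T : Pt → Pt) (hT : IsTMap cfg T)
    (i j k : Fin 3) (hij : i ≠ j) (hik : i ≠ k) (hjk : j ≠ k)
    (Vj Vk : Pt) (c D : ℝ) (hc0 : 0 ≤ c) (hc1 : c ≤ 1)
    (hcj : ∀ x ∈ cfg.L i, ∀ p, IsOrthProj (cfg.L j) x p → dist p Vj ≤ c * dist x Vj)
    (hck : ∀ x ∈ cfg.L i, ∀ p, IsOrthProj (cfg.L k) x p → dist p Vk ≤ c * dist x Vk)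
    (hdj : dist Vj cfg.A ≤ D) (hdk : dist Vk cfg.A ≤ D)
    (y : Pt) (hy : y ∈ cfg.L i) (hyj : y ∉ cfg.L j) (hyk : y ∉ cfg.L k) :
    dist (T y) cfg.A ≤ max (dist y cfg.A) (c * dist y cfg.A + 2 * D) := by
  have hD0 : 0 ≤ D := le_trans dist_nonneg hdj
  obtain ⟨aj, dj, hdj0, hEj⟩ := cfg.isLine j
  obtain ⟨ak, dk, hdk0, hEk⟩ := cfg.isLine k
  set p₁ : Pt := aj + (⟪y - aj, dj⟫ / ‖dj‖^2) • dj with hp₁def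
  set p₂ : Pt := ak + (⟪y - ak, dk⟫ / ‖dk‖^2) • dk with hp₂def
  have hp₁ : IsOrthProj (cfg.L j) y p₁ := hEj ▸ isOrthProj_formula aj dj y hdj0
  have hp₂ : IsOrthProj (cfg.L k) y p₂ := hEk ▸ isOrthProj_formula ak dk y hdk0
  obtain ⟨h1, h2, h3⟩ := hT.2.2.2.2 i j k hij hik hjk y hy hyj hyk p₁ p₂ hp₁ hp₂
  rcases lt_trichotomy (dist y p₁) (dist y p₂) with hlt | heq | hgt
  · rw [h2 hlt]
    refine le_trans ?_ (le_max_right _ _)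
    have t0 : dist p₂ Vk ≤ c * dist y Vk := hck y hy p₂ hp₂
    have t1 : dist y Vk ≤ dist y cfg.A + D := by
      have := dist_triangle y cfg.A Vk
      rw [dist_comm cfg.A Vk] at this
      linarith
    have t2 : dist p₂ cfg.A ≤ dist p₂ Vk + dist Vk cfg.A := dist_triangle _ _ _
    nlinarith
  · rw [h3 heq]; exact le_max_left _ _
  · rw [h1 hgt]
    refine le_trans ?_ (le_max_right _ _)
    have t0 : dist p₁ Vj ≤ c * dist y Vj := hcj y hy p₁ hp₁
    have t1 : dist y Vj ≤ dist y cfg.A + D := by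
      have := dist_triangle y cfg.A Vj
      rw [dist_comm cfg.A Vj] at this
      linarith
    have t2 : dist p₁ cfg.A ≤ dist p₁ Vj + dist Vj cfg.A := dist_triangle _ _ _
    nlinarith

/-- For every `x ∈ X`, the forward orbit `{Tⁿ x : n ∈ ℕ}` is a bounded subset of the
plane: successive images of `T` never diverge. -/
theorem forward_orbit_bounded (cfg : Config) (T : Pt → Pt) (hT : IsTMap cfg T) :
    ∀ x ∈ cfg.X, Bornology.IsBounded (Set.range fun n : ℕ => T^[n] x) := by
  intro x hx
  -- the six contraction constants
  obtain ⟨c01, hc01n, hc01l, hc01⟩ := main_step (cfg.L 0) (cfg.L 1) (cfg.isLine 0) (cfg.isLine 1) cfg.A cfg.h01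
  obtain ⟨c10, hc10n, hc10l, hc10⟩ := main_step (cfg.L 1) (cfg.L 0) (cfg.isLine 1) (cfg.isLine 0) cfg.A (by rw [Set.inter_comm]; exact cfg.h01)
  obtain ⟨c02, hc02n, hc02l, hc02⟩ := main_step (cfg.L 0) (cfg.L 2) (cfg.isLine 0) (cfg.isLine 2) cfg.B cfg.h02
  obtain ⟨c20, hc20n, hc20l, hc20⟩ := main_step (cfg.L 2) (cfg.L 0) (cfg.isLine 2) (cfg.isLine 0) cfg.B (by rw [Set.inter_comm]; exact cfg.h02)
  obtain ⟨c12, hc12n, hc12l, hc12⟩ := main_step (cfg.L 1) (cfg.L 2) (cfg.isLine 1) (cfg.isLine 2) cfg.C cfg.h12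
  obtain ⟨c21, hc21n, hc21l, hc21⟩ := main_step (cfg.L 2) (cfg.L 1) (cfg.isLine 2) (cfg.isLine 1) cfg.C (by rw [Set.inter_comm]; exact cfg.h12)
  set c : ℝ := max (max c01 c10) (max (max c02 c20) (max c12 c21)) with hcdef
  have hc0 : 0 ≤ c := le_trans hc01n (le_trans (le_max_left _ _) (le_max_left _ _))
  have hc1 : c < 1 := by
    apply max_lt (max_lt hc01l hc10l) (max_lt (max_lt hc02l hc20l) (max_lt hc12l hc21l))
  have upg : ∀ (L : Set Pt) (V : Pt) (c' : ℝ), c' ≤ c →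
      (∀ x ∈ L, ∀ p, IsOrthProj (cfg.L 0) x p → True) → True := fun _ _ _ _ _ => trivial
  have mono : ∀ {L L' : Set Pt} {V : Pt} {c' : ℝ}, c' ≤ c →
      (∀ x ∈ L, ∀ p, IsOrthProj L' x p → dist p V ≤ c' * dist x V) →
      (∀ x ∈ L, ∀ p, IsOrthProj L' x p → dist p V ≤ c * dist x V) := by
    intro L L' V c' hle H x hxL p hp
    exact le_trans (H x hxL p hp) (mul_le_mul_of_nonneg_right hle dist_nonneg)
  have l01 : c01 ≤ c := le_trans (le_max_left _ _) (le_max_left _ _)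
  have l10 : c10 ≤ c := le_trans (le_max_right _ _) (le_max_left _ _)
  have l02 : c02 ≤ c := le_trans (le_trans (le_max_left _ _) (le_max_left _ _)) (le_max_right _ _)
  have l20 : c20 ≤ c := le_trans (le_trans (le_max_right _ _) (le_max_left _ _)) (le_max_right _ _)
  have l12 : c12 ≤ c := le_trans (le_trans (le_max_left _ _) (le_max_right _ _)) (le_max_right _ _)
  have l21 : c21 ≤ c := le_trans (le_trans (le_max_right _ _) (le_max_right _ _)) (le_max_right _ _)
  set D : ℝ := max (dist cfg.A cfg.B) (dist cfg.A cfg.C) with hDdef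
  have hD0 : 0 ≤ D := le_trans dist_nonneg (le_max_left _ _)
  have hDA : dist cfg.A cfg.A ≤ D := by rw [dist_self]; exact hD0
  have hDB : dist cfg.B cfg.A ≤ D := by rw [dist_comm]; exact le_max_left _ _
  have hDC : dist cfg.C cfg.A ≤ D := by rw [dist_comm]; exact le_max_right _ _
  -- one-step bound on all of X
  have step : ∀ y ∈ cfg.X, dist (T y) cfg.A ≤ max (dist y cfg.A) (c * dist y cfg.A + 2 * D) := by
    intro y hy
    by_cases hyA : y = cfg.A
    · rw [hyA, hT.2.1]; exact le_max_left _ _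
    by_cases hyB : y = cfg.B
    · rw [hyB, hT.2.2.1]; exact le_max_left _ _
    by_cases hyC : y = cfg.C
    · rw [hyC, hT.2.2.2.1]; exact le_max_left _ _
    have m01 : y ∈ cfg.L 0 → y ∈ cfg.L 1 → False := fun h h' =>
      hyA (by have := cfg.h01 ▸ Set.mem_inter h h'; simpa using this)
    have m02 : y ∈ cfg.L 0 → y ∈ cfg.L 2 → False := fun h h' =>
      hyB (by have := cfg.h02 ▸ Set.mem_inter h h'; simpa using this)
    have m12 : y ∈ cfg.L 1 → y ∈ cfg.L 2 → False := fun h h' =>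
      hyC (by have := cfg.h12 ▸ Set.mem_inter h h'; simpa using this)
    rcases hy with (h0 | h1) | h2
    · exact step_case cfg T hT 0 1 2 (by decide) (by decide) (by decide) cfg.A cfg.B c D
        hc0 hc1.le (mono l01 hc01) (mono l02 hc02) hDA hDB y h0
        (fun h => m01 h0 h) (fun h => m02 h0 h)
    · exact step_case cfg T hT 1 0 2 (by decide) (by decide) (by decide) cfg.A cfg.C c D
        hc0 hc1.le (mono l10 hc10) (mono l12 hc12) hDA hDC y h1
        (fun h => m01 h h1) (fun h => m12 h1 h)
    · exact step_case cfg T hT 2 0 1 (by decide) (by decide) (by decide) cfg.B cfg.C c D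
        hc0 hc1.le (mono l20 hc20) (mono l21 hc21) hDB hDC y h2
        (fun h => m02 h h2) (fun h => m12 h h2)
  -- the invariant bound
  set M : ℝ := max (dist x cfg.A) (2 * D / (1 - c)) with hMdef
  have hM1 : dist x cfg.A ≤ M := le_max_left _ _
  have hM2 : 2 * D / (1 - c) ≤ M := le_max_right _ _
  have h1c : (0:ℝ) < 1 - c := by linarith
  have key : ∀ n : ℕ, T^[n] x ∈ cfg.X ∧ dist (T^[n] x) cfg.A ≤ M := by
    intro n
    induction n with
    | zero => exact ⟨by simpa using hx, by simpa using hM1⟩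
    | succ n ih =>
      obtain ⟨hmem, hdist⟩ := ih
      rw [Function.iterate_succ_apply']
      refine ⟨hT.1 _ hmem, ?_⟩
      have hstep := step _ hmem
      have h2 : c * dist (T^[n] x) cfg.A + 2 * D ≤ M := by
        have hcd : c * dist (T^[n] x) cfg.A ≤ c * M := mul_le_mul_of_nonneg_left hdist hc0
        have h2D : 2 * D ≤ M * (1 - c) := (div_le_iff₀ h1c).mp hM2
        nlinarith
      exact le_trans hstep (max_le hdist h2)
  apply Bornology.IsBounded.subset (Metric.isBounded_closedBall (x := cfg.A) (r := M))
  rintro _ ⟨n, rfl⟩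
  exact Metric.mem_closedBall.mpr (key n).2
end
end

section
/- The set of fixed points of T is finite; there exists no configuration of three pairwise nonparallel, nonconcurrent lines for which T has infinitely many fixed points. -/
open EuclideanGeometry Filter Metric Real

noncomputable section

/-! A fixed point other than a vertex lies on exactly one line `Lᵢ`, and it must be equidistant
from the other two lines `Lⱼ, Lₖ`: otherwise `T` moves it onto the farther one. With unit direction
vectors, the distance from the point `a + t • d` of `Lᵢ` to another line is the absolute value of an
affine function of `t`, so the equidistant points of `Lᵢ` are the zeros of two affine functions.
Neither vanishes identically, since at the vertex `Lᵢ ∩ Lⱼ` one distance is zero and the other is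
not. So each line carries at most two fixed points besides the vertices. -/

def wedge (u v : Pt) : ℝ := u 0 * v 1 - u 1 * v 0

def line (a d : Pt) : Set Pt := {p | ∃ t : ℝ, p = a + t • d}

lemma wedge_add_smul_sub (a b d e : Pt) (t : ℝ) :
    wedge (a + t • d - b) e = wedge d e * t + wedge (a - b) e := by
  simp only [wedge, PiLp.sub_apply, PiLp.add_apply, PiLp.smul_apply, smul_eq_mul]
  ring

lemma norm_sq_eq_coord (u : Pt) : ‖u‖ ^ 2 = u 0 ^ 2 + u 1 ^ 2 := by
  simp [EuclideanSpace.real_norm_sq_eq, Fin.sum_univ_two]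

lemma dist_sq_eq_coord (x y : Pt) : dist x y ^ 2 = (x 0 - y 0) ^ 2 + (x 1 - y 1) ^ 2 := by
  simp [dist_eq_norm, norm_sq_eq_coord]

lemma exists_isOrthProj_line (a d x : Pt) (hd : ‖d‖ = 1) :
    ∃ p, IsOrthProj (line a d) x p ∧ dist x p = |wedge (x - a) d| := by
  have hd' : d 0 ^ 2 + d 1 ^ 2 = 1 := by rw [← norm_sq_eq_coord, hd, one_pow]
  -- `a + t • d` is the foot of the perpendicular: `x - (a + t • d)` is orthogonal to `d`
  set t := (x 0 - a 0) * d 0 + (x 1 - a 1) * d 1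
  have hdist : ∀ s : ℝ, dist x (a + s • d) ^ 2 = dist x (a + t • d) ^ 2 + (s - t) ^ 2 := by
    intro s
    simp only [dist_sq_eq_coord, PiLp.add_apply, PiLp.smul_apply, smul_eq_mul, t]
    linear_combination (s ^ 2 - t ^ 2) * hd'
  refine ⟨a + t • d, ⟨⟨t, rfl⟩, ?_⟩, ?_⟩
  · rintro _ ⟨s, rfl⟩
    exact pow_le_pow_iff_left₀ dist_nonneg dist_nonneg two_ne_zero |>.mp
      (by rw [hdist s]; nlinarith [sq_nonneg (s - t)])
  · rw [← sq_eq_sq₀ dist_nonneg (abs_nonneg _), sq_abs, dist_sq_eq_coord]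
    simp only [wedge, PiLp.add_apply, PiLp.smul_apply, PiLp.sub_apply, smul_eq_mul, t]
    -- Lagrange's identity `wedge w d ^ 2 + ⟪w, d⟫ ^ 2 = ‖w‖ ^ 2 * ‖d‖ ^ 2` for `w = x - a`
    linear_combination
      (((x 0 - a 0) * d 0 + (x 1 - a 1) * d 1) ^ 2 - (x 0 - a 0) ^ 2 - (x 1 - a 1) ^ 2) * hd'

lemma IsOrthProj.dist_eq_infDist {L : Set Pt} {x p : Pt} (h : IsOrthProj L x p) :
    dist x p = infDist x L :=
  le_antisymm ((le_infDist ⟨p, h.1⟩).mpr h.2) (infDist_le_dist_of_mem h.1)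

lemma infDist_line (a d x : Pt) (hd : ‖d‖ = 1) : infDist x (line a d) = |wedge (x - a) d| := by
  obtain ⟨p, hp, hdist⟩ := exists_isOrthProj_line a d x hd
  rw [← hp.dist_eq_infDist, hdist]

lemma IsLine.exists_eq_line_of_norm_eq_one {L : Set Pt} (hL : IsLine L) :
    ∃ a d, ‖d‖ = 1 ∧ L = line a d := by
  obtain ⟨a, d, hd, rfl⟩ := hL
  have hd' : ‖d‖ ≠ 0 := norm_ne_zero_iff.mpr hd
  refine ⟨a, ‖d‖⁻¹ • d, norm_smul_inv_norm hd, Set.ext fun p => ⟨?_, ?_⟩⟩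
  · rintro ⟨t, rfl⟩
    exact ⟨t * ‖d‖, by rw [smul_smul, mul_assoc, mul_inv_cancel₀ hd', mul_one]⟩
  · rintro ⟨t, rfl⟩
    exact ⟨t * ‖d‖⁻¹, by rw [smul_smul]⟩

lemma IsLine.exists_isOrthProj {L : Set Pt} (hL : IsLine L) (x : Pt) : ∃ p, IsOrthProj L x p := by
  obtain ⟨a, d, hd, rfl⟩ := hL.exists_eq_line_of_norm_eq_one
  obtain ⟨p, hp, -⟩ := exists_isOrthProj_line a d x hd
  exact ⟨p, hp⟩

lemma IsLine.infDist_eq_zero_iff {L : Set Pt} (hL : IsLine L) {x : Pt} :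
    infDist x L = 0 ↔ x ∈ L := by
  refine ⟨fun h => ?_, infDist_zero_of_mem⟩
  obtain ⟨p, hp⟩ := hL.exists_isOrthProj x
  exact dist_eq_zero.mp (hp.dist_eq_infDist.trans h) ▸ hp.1

lemma subsingleton_setOf_mul_add_eq_zero {p q c : ℝ} (hc : p * c + q ≠ 0) :
    {t : ℝ | p * t + q = 0}.Subsingleton := by
  intro t₁ (h₁ : p * t₁ + q = 0) t₂ (h₂ : p * t₂ + q = 0)
  have hp : p ≠ 0 := by
    rintro rfl
    exact hc (by linarith)
  exact mul_left_cancel₀ hp (by linarith)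

lemma finite_setOf_abs_mul_add_eq {p q r s c : ℝ} (hc : |p * c + q| ≠ |r * c + s|) :
    {t : ℝ | |p * t + q| = |r * t + s|}.Finite := by
  have hsub : {t : ℝ | |p * t + q| = |r * t + s|} ⊆
      {t | (p - r) * t + (q - s) = 0} ∪ {t | (p + r) * t + (q + s) = 0} := by
    intro t (ht : |p * t + q| = |r * t + s|)
    rcases abs_eq_abs.mp ht with h | h
    exacts [.inl (show _ = _ by linear_combination h), .inr (show _ = _ by linear_combination h)]
  refine Set.Finite.subset (.union ?_ ?_) hsub <;>
    refine Set.Subsingleton.finite (subsingleton_setOf_mul_add_eq_zero (c := c) fun h => hc ?_)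
  · rw [show p * c + q = r * c + s by linarith]
  · rw [show p * c + q = -(r * c + s) by linarith, abs_neg]

lemma finite_setOf_infDist_eq {L M N : Set Pt} (hL : IsLine L) (hM : IsLine M) (hN : IsLine N)
    {P : Pt} (hPL : P ∈ L) (hPM : P ∈ M) (hPN : P ∉ N) :
    {x ∈ L | infDist x M = infDist x N}.Finite := by
  obtain ⟨a, d, -, rfl⟩ := hL
  obtain ⟨b, e, he, rfl⟩ := hM.exists_eq_line_of_norm_eq_one
  obtain ⟨b', e', he', rfl⟩ := hN.exists_eq_line_of_norm_eq_one
  have along : ∀ (b e : Pt), ‖e‖ = 1 → ∀ t : ℝ,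
      infDist (a + t • d) (line b e) = |wedge d e * t + wedge (a - b) e| := by
    intro b e he t
    rw [infDist_line _ _ _ he, wedge_add_smul_sub]
  obtain ⟨c, rfl⟩ := hPL
  have hc : |wedge d e * c + wedge (a - b) e| ≠ |wedge d e' * c + wedge (a - b') e'| := by
    rw [← along b e he, ← along b' e' he', infDist_zero_of_mem hPM]
    exact Ne.symm (mt hN.infDist_eq_zero_iff.mp hPN)
  refine ((finite_setOf_abs_mul_add_eq hc).image fun t => a + t • d).subset ?_
  rintro _ ⟨⟨t, rfl⟩, ht⟩
  exact ⟨t, by rwa [along b e he, along b' e' he'] at ht, rfl⟩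

lemma IsTMap.infDist_eq_of_apply_eq_self {cfg : Config} {T : Pt → Pt} (hT : IsTMap cfg T)
    {i j k : Fin 3} (hij : i ≠ j) (hik : i ≠ k) (hjk : j ≠ k) {x : Pt} (hx : x ∈ cfg.L i)
    (hxj : x ∉ cfg.L j) (hxk : x ∉ cfg.L k) (hfix : T x = x) :
    infDist x (cfg.L j) = infDist x (cfg.L k) := by
  obtain ⟨p, hp⟩ := (cfg.isLine j).exists_isOrthProj x
  obtain ⟨q, hq⟩ := (cfg.isLine k).exists_isOrthProj x
  obtain ⟨hpq, hqp, -⟩ := hT.2.2.2.2 i j k hij hik hjk x hx hxj hxk p q hp hq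
  rw [← hp.dist_eq_infDist, ← hq.dist_eq_infDist]
  refine le_antisymm (not_lt.mp fun h => hxj ?_) (not_lt.mp fun h => hxk ?_)
  · exact hfix.symm.trans (hpq h) ▸ hp.1
  · exact hfix.symm.trans (hqp h) ▸ hq.1

lemma Config.mem_vertices_or_mem_exactly_one (cfg : Config) {x : Pt} (hx : x ∈ cfg.X) :
    x ∈ ({cfg.A, cfg.B, cfg.C} : Set Pt) ∨
      (x ∈ cfg.L 0 ∧ x ∉ cfg.L 1 ∧ x ∉ cfg.L 2) ∨
      (x ∈ cfg.L 1 ∧ x ∉ cfg.L 0 ∧ x ∉ cfg.L 2) ∨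
      (x ∈ cfg.L 2 ∧ x ∉ cfg.L 0 ∧ x ∉ cfg.L 1) := by
  have hA : x ∈ cfg.L 0 → x ∈ cfg.L 1 → x = cfg.A := fun h₀ h₁ =>
    (Set.eq_singleton_iff_unique_mem.mp cfg.h01).2 x ⟨h₀, h₁⟩
  have hB : x ∈ cfg.L 0 → x ∈ cfg.L 2 → x = cfg.B := fun h₀ h₂ =>
    (Set.eq_singleton_iff_unique_mem.mp cfg.h02).2 x ⟨h₀, h₂⟩
  have hC : x ∈ cfg.L 1 → x ∈ cfg.L 2 → x = cfg.C := fun h₁ h₂ =>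
    (Set.eq_singleton_iff_unique_mem.mp cfg.h12).2 x ⟨h₁, h₂⟩
  simp only [Config.X, Set.mem_union] at hx
  simp only [Set.mem_insert_iff, Set.mem_singleton_iff]
  tauto

/-- The set of fixed points of `T` is finite: no configuration of three pairwise
nonparallel, nonconcurrent lines yields infinitely many fixed points. -/
theorem fixedPoints_finite (cfg : Config) (T : Pt → Pt) (hT : IsTMap cfg T) :
    {x | x ∈ cfg.X ∧ T x = x}.Finite := by
  obtain ⟨hA, hA_unique⟩ := Set.eq_singleton_iff_unique_mem.mp cfg.h01
  obtain ⟨hB, hB_unique⟩ := Set.eq_singleton_iff_unique_mem.mp cfg.h02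
  have hA₂ : cfg.A ∉ cfg.L 2 := fun h => cfg.hAB (hB_unique _ ⟨hA.1, h⟩)
  have hB₁ : cfg.B ∉ cfg.L 1 := fun h => cfg.hAB (hA_unique _ ⟨hB.1, h⟩).symm
  have hL := cfg.isLine
  refine (((Set.toFinite {cfg.A, cfg.B, cfg.C}).union
    (finite_setOf_infDist_eq (hL 0) (hL 1) (hL 2) hA.1 hA.2 hA₂)).union
    (finite_setOf_infDist_eq (hL 1) (hL 0) (hL 2) hA.2 hA.1 hA₂)).union
    (finite_setOf_infDist_eq (hL 2) (hL 0) (hL 1) hB.2 hB.1 hB₁) |>.subset ?_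
  rintro x ⟨hx, hfix⟩
  have tie := fun {i j k : Fin 3} (hij : i ≠ j) (hik : i ≠ k) (hjk : j ≠ k) =>
    hT.infDist_eq_of_apply_eq_self hij hik hjk (x := x)
  rcases cfg.mem_vertices_or_mem_exactly_one hx with
    h | ⟨h₀, h₁, h₂⟩ | ⟨h₁, h₀, h₂⟩ | ⟨h₂, h₀, h₁⟩
  · exact .inl (.inl (.inl h))
  · exact .inl (.inl (.inr ⟨h₀, tie (by decide) (by decide) (by decide) h₀ h₁ h₂ hfix⟩))
  · exact .inl (.inr ⟨h₁, tie (by decide) (by decide) (by decide) h₁ h₀ h₂ hfix⟩)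
  · exact .inr ⟨h₂, tie (by decide) (by decide) (by decide) h₂ h₀ h₁ hfix⟩
end
end

section
/- If x and y lie in the same connected component of X \ Ω, then T(x) and T(y) lie in the same connected component of X \ Ω; equivalently, for every interval I_a of the system there exists an interval I_b of the system with T(I_a) ⊆ I_b. -/
open EuclideanGeometry Filter Metric Real

noncomputable section

/-- `Ω`: the set of points of `X` some iterate of which is a fixed point of `T`
(the fixed points together with all their preimages under iterates of `T`). -/
def Omega (cfg : Config) (T : Pt → Pt) : Set Pt :=
  {x | x ∈ cfg.X ∧ ∃ n : ℕ, T (T^[n] x) = T^[n] x}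

/-- `X' = X \ (Ω ∪ {A, B, C})`. -/
def Xp (cfg : Config) (T : Pt → Pt) : Set Pt :=
  cfg.X \ (Omega cfg T ∪ {cfg.A, cfg.B, cfg.C})

/-- The intervals of the system: the connected components of `X \ Ω`. -/
def SystemInterval (cfg : Config) (T : Pt → Pt) (I : Set Pt) : Prop :=
  ∃ x ∈ cfg.X \ Omega cfg T, I = connectedComponentIn (cfg.X \ Omega cfg T) x

lemma isClosed_of_isLine {L : Set Pt} (h : IsLine L) : IsClosed L := by
  obtain ⟨a, d, hd, rfl⟩ := h
  have heq : {p : Pt | ∃ t : ℝ, p = a + t • d}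
      = (AffineSubspace.mk' a (Submodule.span ℝ {d}) : Set Pt) := by
    ext p
    simp only [Set.mem_setOf_eq, SetLike.mem_coe, AffineSubspace.mem_mk',
      Submodule.mem_span_singleton, vsub_eq_sub]
    constructor
    · rintro ⟨t, rfl⟩; exact ⟨t, by abel⟩
    · rintro ⟨t, ht⟩; exact ⟨t, by rw [ht]; abel⟩
  rw [heq]
  exact (AffineSubspace.mk' a _).closed_of_finiteDimensional

lemma exists_orthProj {L : Set Pt} (h : IsLine L) :
    ∃ P : Pt → Pt, Continuous P ∧ ∀ x, IsOrthProj L x (P x) := by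
  obtain ⟨a, d, hd, rfl⟩ := h
  have hdd : (0:ℝ) < inner ℝ d d := by
    rw [real_inner_self_eq_norm_sq]
    exact pow_pos (norm_pos_iff.mpr hd) 2
  have hnormd : (inner ℝ d d : ℝ) = ‖d‖ ^ 2 := real_inner_self_eq_norm_sq d
  refine ⟨fun x => a + (((inner ℝ (x - a) d : ℝ)) / inner ℝ d d) • d, ?_, ?_⟩
  · have hc : Continuous fun x : Pt => (inner ℝ (x - a) d : ℝ) :=
      (continuous_id.sub continuous_const).inner continuous_const
    exact continuous_const.add ((hc.div_const _).smul continuous_const)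
  · intro x
    set s : ℝ := (inner ℝ (x - a) d : ℝ) / inner ℝ d d with hs
    refine ⟨⟨s, rfl⟩, ?_⟩
    rintro q ⟨t, rfl⟩
    have hinner : (inner ℝ (x - a) d : ℝ) = s * ‖d‖ ^ 2 := by
      rw [hs, hnormd, div_mul_cancel₀ _ (pow_ne_zero 2 (norm_ne_zero_iff.mpr hd))]
    have expand : ∀ r : ℝ, ‖(x - a) - r • d‖ ^ 2
        = ‖x - a‖ ^ 2 - 2 * (r * (inner ℝ (x - a) d : ℝ)) + r ^ 2 * ‖d‖ ^ 2 := by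
      intro r
      rw [norm_sub_sq_real, real_inner_smul_right, norm_smul, mul_pow, Real.norm_eq_abs, sq_abs]
    have hsq : ‖(x - a) - s • d‖ ^ 2 ≤ ‖(x - a) - t • d‖ ^ 2 := by
      rw [expand s, expand t, hinner]
      nlinarith [mul_nonneg (sq_nonneg (t - s)) (sq_nonneg ‖d‖)]
    have h1 : x - (a + s • d) = (x - a) - s • d := by abel
    have h2 : x - (a + t • d) = (x - a) - t • d := by abel
    rw [dist_eq_norm, dist_eq_norm, h1, h2]
    have := Real.sqrt_le_sqrt hsq
    rwa [Real.sqrt_sq (norm_nonneg _), Real.sqrt_sq (norm_nonneg _)] at this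

lemma vertices_omega (cfg : Config) (T : Pt → Pt) (hT : IsTMap cfg T) :
    cfg.A ∈ Omega cfg T ∧ cfg.B ∈ Omega cfg T ∧ cfg.C ∈ Omega cfg T := by
  have hA : cfg.A ∈ cfg.L 0 ∩ cfg.L 1 := by rw [cfg.h01]; rfl
  have hB : cfg.B ∈ cfg.L 0 ∩ cfg.L 2 := by rw [cfg.h02]; rfl
  have hC : cfg.C ∈ cfg.L 1 ∩ cfg.L 2 := by rw [cfg.h12]; rfl
  refine ⟨⟨Or.inl (Or.inl hA.1), 0, by simpa using hT.2.1⟩,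
    ⟨Or.inl (Or.inl hB.1), 0, by simpa using hT.2.2.1⟩,
    ⟨Or.inl (Or.inr hC.1), 0, by simpa using hT.2.2.2.1⟩⟩

lemma one_line (cfg : Config) (T : Pt → Pt) (hT : IsTMap cfg T)
    (i j k : Fin 3)
    (hcover : ∀ x ∈ cfg.X, x ∈ cfg.L i ∨ x ∈ cfg.L j ∨ x ∈ cfg.L k)
    (hvert : ∀ x, x ∈ cfg.L i → (x ∈ cfg.L j ∨ x ∈ cfg.L k)
      → x = cfg.A ∨ x = cfg.B ∨ x = cfg.C)
    (Ia : Set Pt) (hpre : IsPreconnected Ia)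
    (hsub : Ia ⊆ cfg.X \ Omega cfg T)
    (x₀ : Pt) (hx₀ : x₀ ∈ Ia) (hx₀i : x₀ ∈ cfg.L i) :
    ∀ x ∈ Ia, x ∈ cfg.L i ∧ x ∉ cfg.L j ∧ x ∉ cfg.L k := by
  obtain ⟨hAΩ, hBΩ, hCΩ⟩ := vertices_omega cfg T hT
  have hnovert : ∀ x ∈ Ia, x ≠ cfg.A ∧ x ≠ cfg.B ∧ x ≠ cfg.C := by
    intro x hx
    refine ⟨?_, ?_, ?_⟩ <;> rintro rfl
    · exact (hsub hx).2 hAΩ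
    · exact (hsub hx).2 hBΩ
    · exact (hsub hx).2 hCΩ
  have hempty : ∀ x ∈ Ia, x ∉ cfg.L j ∪ cfg.L k := by
    intro x hx hxjk
    have hclosed_j := isClosed_of_isLine (cfg.isLine j)
    have hclosed_k := isClosed_of_isLine (cfg.isLine k)
    have hclosed_i := isClosed_of_isLine (cfg.isLine i)
    have hne := isPreconnected_closed_iff.mp hpre (cfg.L i) (cfg.L j ∪ cfg.L k)
      hclosed_i (hclosed_j.union hclosed_k)
      (fun y hy => by
        rcases hcover y (hsub hy).1 with h | h | h
        · exact Or.inl h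
        · exact Or.inr (Or.inl h)
        · exact Or.inr (Or.inr h))
      ⟨x₀, hx₀, hx₀i⟩ ⟨x, hx, hxjk⟩
    obtain ⟨z, hzIa, hzi, hzjk⟩ := hne
    rcases hvert z hzi hzjk with h | h | h
    · exact (hnovert z hzIa).1 h
    · exact (hnovert z hzIa).2.1 h
    · exact (hnovert z hzIa).2.2 h
  intro x hx
  have hxjk := hempty x hx
  refine ⟨?_, fun h => hxjk (Or.inl h), fun h => hxjk (Or.inr h)⟩
  rcases hcover x (hsub hx).1 with h | h | h
  · exact h
  · exact absurd (Or.inl h) hxjk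
  · exact absurd (Or.inr h) hxjk

lemma key_preconnected (cfg : Config) (T : Pt → Pt) (hT : IsTMap cfg T)
    (i j k : Fin 3) (hij : i ≠ j) (hik : i ≠ k) (hjk : j ≠ k)
    (Ia : Set Pt) (hpre : IsPreconnected Ia)
    (hsub : Ia ⊆ cfg.X \ Omega cfg T)
    (hline : ∀ x ∈ Ia, x ∈ cfg.L i ∧ x ∉ cfg.L j ∧ x ∉ cfg.L k) :
    IsPreconnected (T '' Ia) := by
  obtain ⟨Pj, hPjc, hPj⟩ := exists_orthProj (cfg.isLine j)
  obtain ⟨Pk, hPkc, hPk⟩ := exists_orthProj (cfg.isLine k)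
  have hTx : ∀ x ∈ Ia, T x ≠ x := by
    intro x hx hfix
    exact (hsub hx).2 ⟨(hsub hx).1, 0, by simpa using hfix⟩
  have hTspec : ∀ x ∈ Ia,
      (dist x (Pj x) > dist x (Pk x) → T x = Pj x) ∧
      (dist x (Pk x) > dist x (Pj x) → T x = Pk x) ∧
      (dist x (Pj x) = dist x (Pk x) → T x = x) := fun x hx =>
    hT.2.2.2.2 i j k hij hik hjk x (hline x hx).1 (hline x hx).2.1 (hline x hx).2.2
      (Pj x) (Pk x) (hPj x) (hPk x)
  set g : Pt → ℝ := fun x => dist x (Pj x) - dist x (Pk x) with hg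
  have hgc : ContinuousOn g Ia :=
    ((continuous_id.dist hPjc).sub (continuous_id.dist hPkc)).continuousOn
  have hgne : ∀ x ∈ Ia, g x ≠ 0 := by
    intro x hx h0
    exact hTx x hx ((hTspec x hx).2.2 (by simpa [hg, sub_eq_zero] using h0))
  rcases em (∀ x ∈ Ia, 0 < g x) with hpos | hneg
  · have heq : Set.EqOn T Pj Ia := by
      intro x hx
      refine (hTspec x hx).1 ?_
      have := hpos x hx
      simp only [hg] at this
      linarith
    rw [Set.image_congr heq]
    exact hpre.image Pj hPjc.continuousOn
  · push_neg at hneg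
    obtain ⟨y, hy, hy0⟩ := hneg
    have hylt : g y < 0 := lt_of_le_of_ne hy0 (hgne y hy)
    have hall : ∀ x ∈ Ia, g x < 0 := by
      intro x hx
      by_contra h
      push_neg at h
      have hxgt : 0 < g x := lt_of_le_of_ne h (Ne.symm (hgne x hx))
      have h0 : (0:ℝ) ∈ Set.Icc (g y) (g x) := ⟨hylt.le, hxgt.le⟩
      obtain ⟨z, hz, hz0⟩ := hpre.intermediate_value hy hx hgc h0
      exact hgne z hz hz0
    have heq : Set.EqOn T Pk Ia := by
      intro x hx
      refine (hTspec x hx).2.1 ?_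
      have := hall x hx
      simp only [hg] at this
      linarith
    rw [Set.image_congr heq]
    exact hpre.image Pk hPkc.continuousOn

/-- `T` maps each interval of the system into a single interval of the system: if `x` and
`y` lie in the same connected component of `X \ Ω`, then so do `T x` and `T y`. -/
theorem image_of_interval_in_interval (cfg : Config) (T : Pt → Pt) (hT : IsTMap cfg T)
    (Ia : Set Pt) (hIa : SystemInterval cfg T Ia) :
    ∃ Ib : Set Pt, SystemInterval cfg T Ib ∧ T '' Ia ⊆ Ib := by
  obtain ⟨x₀, hx₀S, rfl⟩ := hIa
  have hTS : ∀ x ∈ cfg.X \ Omega cfg T, T x ∈ cfg.X \ Omega cfg T := by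
    intro x hx
    refine ⟨hT.1 x hx.1, ?_⟩
    rintro ⟨hX, n, hn⟩
    exact hx.2 ⟨hx.1, n + 1, by rw [Function.iterate_succ_apply]; exact hn⟩
  set S : Set Pt := cfg.X \ Omega cfg T with hS
  have hpre : IsPreconnected (connectedComponentIn S x₀) := isPreconnected_connectedComponentIn
  have hsub : connectedComponentIn S x₀ ⊆ S := connectedComponentIn_subset _ _
  have hmem : x₀ ∈ connectedComponentIn S x₀ := mem_connectedComponentIn hx₀S
  have e01 : ∀ x, x ∈ cfg.L 0 → x ∈ cfg.L 1 → x = cfg.A := fun x h h' => by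
    have : x ∈ cfg.L 0 ∩ cfg.L 1 := ⟨h, h'⟩
    rwa [cfg.h01] at this
  have e02 : ∀ x, x ∈ cfg.L 0 → x ∈ cfg.L 2 → x = cfg.B := fun x h h' => by
    have : x ∈ cfg.L 0 ∩ cfg.L 2 := ⟨h, h'⟩
    rwa [cfg.h02] at this
  have e12 : ∀ x, x ∈ cfg.L 1 → x ∈ cfg.L 2 → x = cfg.C := fun x h h' => by
    have : x ∈ cfg.L 1 ∩ cfg.L 2 := ⟨h, h'⟩
    rwa [cfg.h12] at this
  have hXmem : ∀ x ∈ cfg.X, x ∈ cfg.L 0 ∨ x ∈ cfg.L 1 ∨ x ∈ cfg.L 2 := by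
    rintro x ((h | h) | h)
    exacts [Or.inl h, Or.inr (Or.inl h), Or.inr (Or.inr h)]
  have hconn : IsPreconnected (T '' connectedComponentIn S x₀) := by
    rcases hXmem x₀ hx₀S.1 with h | h | h
    · have hline := one_line cfg T hT 0 1 2 hXmem
        (fun x hx hjk => by
          rcases hjk with h' | h'
          · exact Or.inl (e01 x hx h')
          · exact Or.inr (Or.inl (e02 x hx h')))
        _ hpre hsub x₀ hmem h
      exact key_preconnected cfg T hT 0 1 2 (by decide) (by decide) (by decide)
        _ hpre hsub hline
    · have hline := one_line cfg T hT 1 0 2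
        (fun x hx => by rcases hXmem x hx with h' | h' | h' <;> tauto)
        (fun x hx hjk => by
          rcases hjk with h' | h'
          · exact Or.inl (e01 x h' hx)
          · exact Or.inr (Or.inr (e12 x hx h')))
        _ hpre hsub x₀ hmem h
      exact key_preconnected cfg T hT 1 0 2 (by decide) (by decide) (by decide)
        _ hpre hsub hline
    · have hline := one_line cfg T hT 2 0 1
        (fun x hx => by rcases hXmem x hx with h' | h' | h' <;> tauto)
        (fun x hx hjk => by
          rcases hjk with h' | h'
          · exact Or.inr (Or.inl (e02 x h' hx))
          · exact Or.inr (Or.inr (e12 x h' hx)))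
        _ hpre hsub x₀ hmem h
      exact key_preconnected cfg T hT 2 0 1 (by decide) (by decide) (by decide)
        _ hpre hsub hline
  have hTx₀S : T x₀ ∈ S := hTS x₀ hx₀S
  refine ⟨connectedComponentIn S (T x₀), ⟨T x₀, hTx₀S, rfl⟩, ?_⟩
  refine hconn.subset_connectedComponentIn ⟨x₀, hmem, rfl⟩ ?_
  rintro y ⟨x, hx, rfl⟩
  exact hTS x (hsub hx)
end
end

section
/- Let x, y ∈ X and s ≥ 1, and suppose the two orbits follow a common itinerary for s steps: for every i with 0 ≤ i ≤ s there is an index j(i) ∈ {1,2,3} such that Tⁱ(x) and Tⁱ(y) both lie on the line L_{j(i)}, no iterate Tⁱ(x) or Tⁱ(y) with i ≤ s is one of the vertices A, B, C, and j(i+1) ≠ j(i) for each i < s. Then there exist natural numbers k₁, k₂, k₃ with k₁ + k₂ + k₃ = s such that dist(Tˢ(x), Tˢ(y)) = cos^{k₁}(α') · cos^{k₂}(β') · cos^{k₃}(γ') · dist(x, y). -/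
open EuclideanGeometry Filter Metric Real

noncomputable section

/-- Replace an obtuse angle `θ > π/2` by its supplement `π − θ`. -/
def acuteVal (θ : ℝ) : ℝ := if θ > π / 2 then π - θ else θ

/-- `α'`: the (possibly supplemented) interior angle of `Q` at vertex `A`. -/
def angA (cfg : Config) : ℝ := acuteVal (∠ cfg.B cfg.A cfg.C)

/-- `β'`: the (possibly supplemented) interior angle of `Q` at vertex `B`. -/
def angB (cfg : Config) : ℝ := acuteVal (∠ cfg.A cfg.B cfg.C)

/-- `γ'`: the (possibly supplemented) interior angle of `Q` at vertex `C`. -/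
def angC (cfg : Config) : ℝ := acuteVal (∠ cfg.A cfg.C cfg.B)

/-- `C = max (cos α', cos β', cos γ')`. -/
def maxCos (cfg : Config) : ℝ :=
  max (max (Real.cos (angA cfg)) (Real.cos (angB cfg))) (Real.cos (angC cfg))

/-- `x` and `y` follow a common itinerary `j` for `s` steps: corresponding iterates lie on
the same line `L_{j i}`, no iterate up to step `s` is a vertex, and consecutive itinerary
indices differ. -/
def CommonItinerary (cfg : Config) (T : Pt → Pt) (x y : Pt) (s : ℕ) (j : ℕ → Fin 3) : Prop :=
  (∀ i ≤ s, T^[i] x ∈ cfg.L (j i) ∧ T^[i] y ∈ cfg.L (j i)) ∧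
  (∀ i ≤ s, T^[i] x ∉ ({cfg.A, cfg.B, cfg.C} : Set Pt) ∧
            T^[i] y ∉ ({cfg.A, cfg.B, cfg.C} : Set Pt)) ∧
  (∀ i < s, j (i + 1) ≠ j i)


section AuxItinerary

local notation "⟪" x ", " y "⟫" => @inner ℝ _ _ x y

def proj (b e x : Pt) : Pt := b + ((⟪x - b, e⟫ : ℝ) / (⟪e, e⟫ : ℝ)) • e

lemma isOrthProj_proj (b e : Pt) (he : e ≠ 0) (x : Pt) :
    IsOrthProj {p | ∃ t : ℝ, p = b + t • e} x (proj b e x) := by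
  have hee : (⟪e, e⟫ : ℝ) ≠ 0 := inner_self_ne_zero.2 he
  set c : ℝ := (⟪x - b, e⟫ : ℝ) / (⟪e, e⟫ : ℝ) with hc
  have horth : (⟪x - proj b e x, e⟫ : ℝ) = 0 := by
    have h1 : x - proj b e x = (x - b) - c • e := by
      simp only [proj, ← hc]; abel
    rw [h1, inner_sub_left, real_inner_smul_left, hc, div_mul_cancel₀ _ hee, sub_self]
  constructor
  · exact ⟨c, rfl⟩
  · rintro q ⟨t, rfl⟩
    have hdecomp : x - (b + t • e) = (x - proj b e x) + (c - t) • e := by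
      simp only [proj, ← hc, sub_smul]; abel
    have hsq := norm_add_sq_real (x - proj b e x) ((c - t) • e)
    rw [real_inner_smul_right, horth] at hsq
    rw [dist_eq_norm, dist_eq_norm, hdecomp]
    nlinarith [norm_nonneg (x - proj b e x), norm_nonneg ((c - t) • e),
      norm_nonneg ((x - proj b e x) + (c - t) • e), sq_nonneg ‖(c - t) • e‖]

lemma dist_proj_proj (b e : Pt) (he : e ≠ 0) (x y : Pt) :
    dist (proj b e x) (proj b e y) = |(⟪x - y, e⟫ : ℝ)| / ‖e‖ := by
  have hne : ‖e‖ ≠ 0 := norm_ne_zero_iff.2 he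
  have hee : (⟪e, e⟫ : ℝ) = ‖e‖ ^ 2 := real_inner_self_eq_norm_sq e
  rw [dist_eq_norm]
  have h1 : proj b e x - proj b e y =
      (((⟪x - y, e⟫ : ℝ)) / (⟪e, e⟫ : ℝ)) • e := by
    simp only [proj]
    rw [show (⟪x - y, e⟫ : ℝ) = (⟪x - b, e⟫ : ℝ) - (⟪y - b, e⟫ : ℝ) by
      rw [← inner_sub_left]; congr 1; abel]
    rw [sub_div, sub_smul]; abel
  rw [h1, norm_smul, Real.norm_eq_abs, abs_div, hee]
  rw [abs_of_nonneg (by positivity : (0:ℝ) ≤ ‖e‖ ^ 2)]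
  field_simp

-- chosen base point and direction of each line
def Config.pt (cfg : Config) (i : Fin 3) : Pt := (cfg.isLine i).choose
def Config.dir (cfg : Config) (i : Fin 3) : Pt := (cfg.isLine i).choose_spec.choose

lemma Config.dir_ne_zero (cfg : Config) (i : Fin 3) : cfg.dir i ≠ 0 :=
  (cfg.isLine i).choose_spec.choose_spec.1

lemma Config.L_eq (cfg : Config) (i : Fin 3) :
    cfg.L i = {p | ∃ t : ℝ, p = cfg.pt i + t • cfg.dir i} :=
  (cfg.isLine i).choose_spec.choose_spec.2

def cosRatio (cfg : Config) (i m : Fin 3) : ℝ :=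
  |(⟪cfg.dir i, cfg.dir m⟫ : ℝ)| / (‖cfg.dir i‖ * ‖cfg.dir m‖)

lemma cosRatio_symm (cfg : Config) (i m : Fin 3) : cosRatio cfg i m = cosRatio cfg m i := by
  unfold cosRatio; rw [real_inner_comm, mul_comm]

lemma cos_acuteVal (θ : ℝ) (h0 : 0 ≤ θ) (h1 : θ ≤ π) :
    Real.cos (acuteVal θ) = |Real.cos θ| := by
  unfold acuteVal
  split_ifs with h
  · rw [Real.cos_pi_sub, abs_of_nonpos (Real.cos_nonpos_of_pi_div_two_le_of_le h.le
      (by linarith [Real.pi_pos]))]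
  · rw [abs_of_nonneg (Real.cos_nonneg_of_mem_Icc ⟨by linarith [Real.pi_pos], not_lt.1 h⟩)]

lemma mem_vertices (cfg : Config) (i m : Fin 3) (him : i ≠ m) (p : Pt)
    (hi : p ∈ cfg.L i) (hm : p ∈ cfg.L m) : p ∈ ({cfg.A, cfg.B, cfg.C} : Set Pt) := by
  simp only [Set.mem_insert_iff, Set.mem_singleton_iff]
  fin_cases i <;> fin_cases m <;>
    [exact absurd rfl him;
     exact Or.inl (by have h : p ∈ cfg.L 0 ∩ cfg.L 1 := ⟨hi, hm⟩; rwa [cfg.h01] at h);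
     exact Or.inr (Or.inl (by have h : p ∈ cfg.L 0 ∩ cfg.L 2 := ⟨hi, hm⟩; rwa [cfg.h02] at h));
     exact Or.inl (by have h : p ∈ cfg.L 0 ∩ cfg.L 1 := ⟨hm, hi⟩; rwa [cfg.h01] at h);
     exact absurd rfl him;
     exact Or.inr (Or.inr (by have h : p ∈ cfg.L 1 ∩ cfg.L 2 := ⟨hi, hm⟩; rwa [cfg.h12] at h));
     exact Or.inr (Or.inl (by have h : p ∈ cfg.L 0 ∩ cfg.L 2 := ⟨hm, hi⟩; rwa [cfg.h02] at h));
     exact Or.inr (Or.inr (by have h : p ∈ cfg.L 1 ∩ cfg.L 2 := ⟨hm, hi⟩; rwa [cfg.h12] at h));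
     exact absurd rfl him]

lemma Config.A_mem0 (cfg : Config) : cfg.A ∈ cfg.L 0 :=
  (show cfg.A ∈ cfg.L 0 ∩ cfg.L 1 by rw [cfg.h01]; exact rfl).1
lemma Config.A_mem1 (cfg : Config) : cfg.A ∈ cfg.L 1 :=
  (show cfg.A ∈ cfg.L 0 ∩ cfg.L 1 by rw [cfg.h01]; exact rfl).2
lemma Config.B_mem0 (cfg : Config) : cfg.B ∈ cfg.L 0 :=
  (show cfg.B ∈ cfg.L 0 ∩ cfg.L 2 by rw [cfg.h02]; exact rfl).1
lemma Config.B_mem2 (cfg : Config) : cfg.B ∈ cfg.L 2 :=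
  (show cfg.B ∈ cfg.L 0 ∩ cfg.L 2 by rw [cfg.h02]; exact rfl).2
lemma Config.C_mem1 (cfg : Config) : cfg.C ∈ cfg.L 1 :=
  (show cfg.C ∈ cfg.L 1 ∩ cfg.L 2 by rw [cfg.h12]; exact rfl).1
lemma Config.C_mem2 (cfg : Config) : cfg.C ∈ cfg.L 2 :=
  (show cfg.C ∈ cfg.L 1 ∩ cfg.L 2 by rw [cfg.h12]; exact rfl).2

lemma along (cfg : Config) (i : Fin 3) (V P : Pt) (hV : V ∈ cfg.L i) (hP : P ∈ cfg.L i)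
    (hVP : V ≠ P) : ∃ t : ℝ, t ≠ 0 ∧ P - V = t • cfg.dir i := by
  rw [cfg.L_eq i] at hV hP
  obtain ⟨t₁, rfl⟩ := hV
  obtain ⟨t₂, rfl⟩ := hP
  refine ⟨t₂ - t₁, fun h => hVP ?_, by rw [sub_smul]; abel⟩
  have : t₂ = t₁ := by linarith [sub_eq_zero.1 h]
  rw [this]

lemma cos_acute_angle_eq (cfg : Config) (i m : Fin 3) (V P Q : Pt)
    (hVi : V ∈ cfg.L i) (hPi : P ∈ cfg.L i) (hVm : V ∈ cfg.L m) (hQm : Q ∈ cfg.L m)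
    (hVP : V ≠ P) (hVQ : V ≠ Q) :
    Real.cos (acuteVal (∠ P V Q)) = cosRatio cfg i m := by
  obtain ⟨t, ht, hPV⟩ := along cfg i V P hVi hPi hVP
  obtain ⟨u, hu, hQV⟩ := along cfg m V Q hVm hQm hVQ
  rw [cos_acuteVal _ (EuclideanGeometry.angle_nonneg _ _ _) (EuclideanGeometry.angle_le_pi _ _ _)]
  rw [EuclideanGeometry.angle, InnerProductGeometry.cos_angle]
  have h1 : P -ᵥ V = t • cfg.dir i := hPV
  have h2 : Q -ᵥ V = u • cfg.dir m := hQV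
  rw [h1, h2, real_inner_smul_left, real_inner_smul_right, norm_smul, norm_smul]
  unfold cosRatio
  have hdi : (0:ℝ) < ‖cfg.dir i‖ := norm_pos_iff.2 (cfg.dir_ne_zero i)
  have hdm : (0:ℝ) < ‖cfg.dir m‖ := norm_pos_iff.2 (cfg.dir_ne_zero m)
  have htt : (0:ℝ) < |t| := abs_pos.2 ht
  have huu : (0:ℝ) < |u| := abs_pos.2 hu
  set I : ℝ := ⟪cfg.dir i, cfg.dir m⟫ with hI
  rw [abs_div]
  rw [show |t * (u * I)| = |t| * |u| * |I| by rw [abs_mul, abs_mul]; ring]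
  rw [show |‖t‖ * ‖cfg.dir i‖ * (‖u‖ * ‖cfg.dir m‖)| = |t| * ‖cfg.dir i‖ * (|u| * ‖cfg.dir m‖) by
    simp [Real.norm_eq_abs, abs_mul, abs_of_nonneg (norm_nonneg _)]]
  rw [div_eq_div_iff (by positivity) (by positivity)]
  ring

lemma cos_angA (cfg : Config) : Real.cos (angA cfg) = cosRatio cfg 0 1 :=
  cos_acute_angle_eq cfg 0 1 cfg.A cfg.B cfg.C cfg.A_mem0 cfg.B_mem0 cfg.A_mem1 cfg.C_mem1
    cfg.hAB cfg.hAC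

lemma cos_angB (cfg : Config) : Real.cos (angB cfg) = cosRatio cfg 0 2 :=
  cos_acute_angle_eq cfg 0 2 cfg.B cfg.A cfg.C cfg.B_mem0 cfg.A_mem0 cfg.B_mem2 cfg.C_mem2
    cfg.hAB.symm cfg.hBC

lemma cos_angC (cfg : Config) : Real.cos (angC cfg) = cosRatio cfg 1 2 :=
  cos_acute_angle_eq cfg 1 2 cfg.C cfg.A cfg.B cfg.C_mem1 cfg.A_mem1 cfg.C_mem2 cfg.B_mem2
    cfg.hAC.symm cfg.hBC.symm

-- contraction of distances under projection between lines
lemma dist_proj_line (cfg : Config) (i m : Fin 3) (u v : Pt)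
    (hu : u ∈ cfg.L i) (hv : v ∈ cfg.L i) :
    dist (proj (cfg.pt m) (cfg.dir m) u) (proj (cfg.pt m) (cfg.dir m) v) =
      cosRatio cfg i m * dist u v := by
  rw [cfg.L_eq i] at hu hv
  obtain ⟨s₁, rfl⟩ := hu
  obtain ⟨s₂, rfl⟩ := hv
  rw [dist_proj_proj _ _ (cfg.dir_ne_zero m)]
  have hsub : (cfg.pt i + s₁ • cfg.dir i) - (cfg.pt i + s₂ • cfg.dir i)
      = (s₁ - s₂) • cfg.dir i := by rw [sub_smul]; abel
  rw [dist_eq_norm, hsub, real_inner_smul_left, norm_smul, abs_mul]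
  unfold cosRatio
  have hdi : (0:ℝ) < ‖cfg.dir i‖ := norm_pos_iff.2 (cfg.dir_ne_zero i)
  have hdm : (0:ℝ) < ‖cfg.dir m‖ := norm_pos_iff.2 (cfg.dir_ne_zero m)
  rw [Real.norm_eq_abs]
  field_simp

lemma T_eq_proj (cfg : Config) (T : Pt → Pt) (hT : IsTMap cfg T) (i m : Fin 3) (hmi : m ≠ i)
    (u : Pt) (hu : u ∈ cfg.L i) (hu' : u ∉ ({cfg.A, cfg.B, cfg.C} : Set Pt))
    (hTu : T u ∈ cfg.L m) (hTu' : T u ∉ ({cfg.A, cfg.B, cfg.C} : Set Pt)) :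
    T u = proj (cfg.pt m) (cfg.dir m) u := by
  obtain ⟨n, hni, hnm⟩ : ∃ n : Fin 3, n ≠ i ∧ n ≠ m := by
    revert hmi; fin_cases i <;> fin_cases m <;> decide
  have hum : u ∉ cfg.L m := fun h => hu' (mem_vertices cfg i m hmi.symm u hu h)
  have hun : u ∉ cfg.L n := fun h => hu' (mem_vertices cfg i n hni.symm u hu h)
  set x₁ := proj (cfg.pt m) (cfg.dir m) u with hx₁
  set x₂ := proj (cfg.pt n) (cfg.dir n) u with hx₂
  have hP1 : IsOrthProj (cfg.L m) u x₁ := by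
    rw [cfg.L_eq m]; exact isOrthProj_proj _ _ (cfg.dir_ne_zero m) u
  have hP2 : IsOrthProj (cfg.L n) u x₂ := by
    rw [cfg.L_eq n]; exact isOrthProj_proj _ _ (cfg.dir_ne_zero n) u
  have H := hT.2.2.2.2 i m n hmi.symm hni.symm (fun h => hnm (h.symm)) u hu hum hun x₁ x₂ hP1 hP2
  rcases lt_trichotomy (dist u x₁) (dist u x₂) with h | h | h
  · exfalso
    have hTx : T u = x₂ := H.2.1 h
    exact hTu' (mem_vertices cfg m n hnm.symm (T u) hTu (hTx ▸ hP2.1))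
  · exfalso
    have hTx : T u = u := H.2.2 h
    exact hum (hTx ▸ hTu)
  · exact H.1 h

lemma step_lemma (cfg : Config) (T : Pt → Pt) (hT : IsTMap cfg T) (i m : Fin 3) (hmi : m ≠ i)
    (u v : Pt) (hu : u ∈ cfg.L i) (hv : v ∈ cfg.L i)
    (hu' : u ∉ ({cfg.A, cfg.B, cfg.C} : Set Pt)) (hv' : v ∉ ({cfg.A, cfg.B, cfg.C} : Set Pt))
    (hTu : T u ∈ cfg.L m) (hTv : T v ∈ cfg.L m)
    (hTu' : T u ∉ ({cfg.A, cfg.B, cfg.C} : Set Pt))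
    (hTv' : T v ∉ ({cfg.A, cfg.B, cfg.C} : Set Pt)) :
    dist (T u) (T v) = cosRatio cfg i m * dist u v := by
  rw [T_eq_proj cfg T hT i m hmi u hu hu' hTu hTu',
      T_eq_proj cfg T hT i m hmi v hv hv' hTv hTv']
  exact dist_proj_line cfg i m u v hu hv

lemma aux_itinerary (cfg : Config) (T : Pt → Pt) (hT : IsTMap cfg T) (x y : Pt) :
    ∀ (s : ℕ) (j : ℕ → Fin 3), CommonItinerary cfg T x y s j →
    ∃ k₁ k₂ k₃ : ℕ, k₁ + k₂ + k₃ = s ∧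
      dist (T^[s] x) (T^[s] y) =
        (Real.cos (angA cfg)) ^ k₁ * (Real.cos (angB cfg)) ^ k₂ *
          (Real.cos (angC cfg)) ^ k₃ * dist x y := by
  intro s
  induction s with
  | zero => intro j _; exact ⟨0, 0, 0, rfl, by simp⟩
  | succ s ih =>
    intro j hit
    have hit' : CommonItinerary cfg T x y s j :=
      ⟨fun i hi => hit.1 i (hi.trans (Nat.le_succ s)),
       fun i hi => hit.2.1 i (hi.trans (Nat.le_succ s)),
       fun i hi => hit.2.2 i (hi.trans (Nat.lt_succ_self s))⟩
    obtain ⟨k₁, k₂, k₃, hsum, hd⟩ := ih j hit'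
    have hne : j (s + 1) ≠ j s := hit.2.2 s (Nat.lt_succ_self s)
    have hmem := hit.1 s (Nat.le_succ s)
    have hmem' := hit.1 (s + 1) le_rfl
    have hver := hit.2.1 s (Nat.le_succ s)
    have hver' := hit.2.1 (s + 1) le_rfl
    simp only [Function.iterate_succ_apply'] at hmem' hver' ⊢
    have hstep : dist (T (T^[s] x)) (T (T^[s] y)) =
        cosRatio cfg (j s) (j (s + 1)) * dist (T^[s] x) (T^[s] y) :=
      step_lemma cfg T hT (j s) (j (s + 1)) hne (T^[s] x) (T^[s] y)
        hmem.1 hmem.2 hver.1 hver.2 hmem'.1 hmem'.2 hver'.1 hver'.2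
    have h3 : ∀ c : Fin 3, c = 0 ∨ c = 1 ∨ c = 2 := by decide
    rcases h3 (j s) with h | h | h <;> rcases h3 (j (s + 1)) with h' | h' | h' <;>
      rw [h, h'] at hstep hne <;>
      first
      | exact absurd rfl hne
      | (refine ⟨k₁ + 1, k₂, k₃, by omega, ?_⟩
         rw [hstep, hd, show cosRatio cfg 0 1 = Real.cos (angA cfg) from (cos_angA cfg).symm]
         ring)
      | (refine ⟨k₁ + 1, k₂, k₃, by omega, ?_⟩
         rw [hstep, hd, cosRatio_symm,
           show cosRatio cfg 0 1 = Real.cos (angA cfg) from (cos_angA cfg).symm]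
         ring)
      | (refine ⟨k₁, k₂ + 1, k₃, by omega, ?_⟩
         rw [hstep, hd, show cosRatio cfg 0 2 = Real.cos (angB cfg) from (cos_angB cfg).symm]
         ring)
      | (refine ⟨k₁, k₂ + 1, k₃, by omega, ?_⟩
         rw [hstep, hd, cosRatio_symm,
           show cosRatio cfg 0 2 = Real.cos (angB cfg) from (cos_angB cfg).symm]
         ring)
      | (refine ⟨k₁, k₂, k₃ + 1, by omega, ?_⟩
         rw [hstep, hd, show cosRatio cfg 1 2 = Real.cos (angC cfg) from (cos_angC cfg).symm]
         ring)
      | (refine ⟨k₁, k₂, k₃ + 1, by omega, ?_⟩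
         rw [hstep, hd, cosRatio_symm,
           show cosRatio cfg 1 2 = Real.cos (angC cfg) from (cos_angC cfg).symm]
         ring)


end AuxItinerary

/-- If `x, y ∈ X` follow a common itinerary for `s ≥ 1` steps, then there are
`k₁ + k₂ + k₃ = s` with
`dist (Tˢ x) (Tˢ y) = cos^{k₁}(α') · cos^{k₂}(β') · cos^{k₃}(γ') · dist x y`. -/
theorem dist_after_common_itinerary (cfg : Config) (T : Pt → Pt) (hT : IsTMap cfg T)
    (x y : Pt) (hx : x ∈ cfg.X) (hy : y ∈ cfg.X)
    (s : ℕ) (hs : 1 ≤ s) (j : ℕ → Fin 3)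
    (hit : CommonItinerary cfg T x y s j) :
    ∃ k₁ k₂ k₃ : ℕ, k₁ + k₂ + k₃ = s ∧
      dist (T^[s] x) (T^[s] y) =
        (Real.cos (angA cfg)) ^ k₁ * (Real.cos (angB cfg)) ^ k₂ *
          (Real.cos (angC cfg)) ^ k₃ * dist x y :=
  aux_itinerary cfg T hT x y s j hit
end
end
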